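/- arXiv:2504.11483 — 4 statements merged into one kernel-verified Lean document; each statement's English description precedes it below -/
import Mathlib

section
/- For any positive integer M, the sum over pairs 1 ≤ h, k ≤ M of gcd(h,k)/(h·k) is bounded above by (sum over 1 ≤ t ≤ M of t · (sum over multiples h ≤ M of t of 1/h)²), and hence is O((log M)³) (for M ≥ 2, bounded by C·(log M)³ for an absolute constant C). -/
open Finset Real

lemma hsum_le (n : ℕ) : ∑ m ∈ Icc 1 n, (1:ℝ)/m ≤ 1 + Real.log n := by
  have h1 : ∑ m ∈ Icc 1 n, (1:ℝ)/m = ((harmonic n : ℚ) : ℝ) := by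
    rw [harmonic]
    push_cast
    rw [show Icc 1 n = Ico 1 (n+1) by rw [Finset.Ico_add_one_right_eq_Icc], Finset.sum_Ico_eq_sum_range]
    simp [one_div, add_comm]
  rw [h1]
  exact harmonic_le_one_add_log n

lemma filter_dvd_eq (M t : ℕ) (ht : 1 ≤ t) :
    (Icc 1 M).filter (fun h => t ∣ h) = (Icc 1 (M / t)).image (fun m => t * m) := by
  ext h
  simp only [mem_filter, mem_Icc, mem_image]
  constructor
  · rintro ⟨⟨h1, h2⟩, m, rfl⟩
    refine ⟨m, ⟨?_, ?_⟩, rfl⟩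
    · rcases Nat.eq_zero_or_pos m with rfl | hm
      · simp at h1
      · exact hm
    · exact (Nat.le_div_iff_mul_le (by omega)).2 (by linarith [Nat.mul_comm t m])
  · rintro ⟨m, ⟨hm1, hm2⟩, rfl⟩
    refine ⟨⟨by nlinarith, ?_⟩, Dvd.intro m rfl⟩
    calc t * m ≤ t * (M / t) := Nat.mul_le_mul_left t hm2
    _ ≤ M := Nat.mul_div_le M t

lemma dsum_le (M t : ℕ) (ht : 1 ≤ t) (hM : 1 ≤ M) :
    ∑ h ∈ (Icc 1 M).filter (fun h => t ∣ h), (1:ℝ)/h ≤ (1/t) * (1 + Real.log M) := by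
  rw [filter_dvd_eq M t ht,
    Finset.sum_image (fun a _ b _ h => Nat.eq_of_mul_eq_mul_left (by omega) h)]
  have heq : ∑ m ∈ Icc 1 (M / t), (1:ℝ)/(↑(t * m)) = (1/t) * ∑ m ∈ Icc 1 (M / t), (1:ℝ)/m := by
    rw [Finset.mul_sum]
    refine Finset.sum_congr rfl fun m _ => ?_
    push_cast
    ring
  rw [heq]
  have h2 : ∑ m ∈ Icc 1 (M / t), (1:ℝ)/m ≤ 1 + Real.log M := by
    refine (hsum_le _).trans ?_
    have hlog : Real.log (M / t : ℕ) ≤ Real.log M := by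
      rcases Nat.eq_zero_or_pos (M / t) with h | h
      · rw [h]; simpa using Real.log_natCast_nonneg M
      · exact Real.log_le_log (by exact_mod_cast h) (by exact_mod_cast Nat.div_le_self M t)
    linarith
  have ht' : (0:ℝ) ≤ 1/t := by positivity
  exact mul_le_mul_of_nonneg_left h2 ht'

theorem gcd_sum_bound :
    (∀ M : ℕ, 1 ≤ M →
      ∑ h ∈ Icc 1 M, ∑ k ∈ Icc 1 M, (Nat.gcd h k : ℝ) / (h * k) ≤
        ∑ t ∈ Icc 1 M, (t : ℝ) * (∑ h ∈ (Icc 1 M).filter (fun h => t ∣ h), (1 : ℝ) / h) ^ 2) ∧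
    ∃ C : ℝ, 0 < C ∧ ∀ M : ℕ, 2 ≤ M →
      ∑ h ∈ Icc 1 M, ∑ k ∈ Icc 1 M, (Nat.gcd h k : ℝ) / (h * k) ≤
        C * (Real.log M) ^ 3 := by
  have main : ∀ M : ℕ, 1 ≤ M →
      ∑ h ∈ Icc 1 M, ∑ k ∈ Icc 1 M, (Nat.gcd h k : ℝ) / (h * k) ≤
        ∑ t ∈ Icc 1 M, (t : ℝ) * (∑ h ∈ (Icc 1 M).filter (fun h => t ∣ h), (1 : ℝ) / h) ^ 2 := by
    intro M hM
    have step1 : ∑ h ∈ Icc 1 M, ∑ k ∈ Icc 1 M, (Nat.gcd h k : ℝ) / (h * k) ≤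
        ∑ h ∈ Icc 1 M, ∑ k ∈ Icc 1 M, ∑ t ∈ Icc 1 M,
          (if t ∣ h ∧ t ∣ k then (t : ℝ) * ((1:ℝ)/h) * ((1:ℝ)/k) else 0) := by
      refine Finset.sum_le_sum fun h hh => Finset.sum_le_sum fun k hk => ?_
      rw [mem_Icc] at hh hk
      have hh1 : 1 ≤ h := hh.1
      have hk1 : 1 ≤ k := hk.1
      have hmem : Nat.gcd h k ∈ (Icc 1 M).filter (fun t => t ∣ h ∧ t ∣ k) := by
        simp only [mem_filter, mem_Icc]
        exact ⟨⟨Nat.gcd_pos_of_pos_left k hh1, (Nat.gcd_le_left k hh1).trans hh.2⟩,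
          Nat.gcd_dvd_left h k, Nat.gcd_dvd_right h k⟩
      have hle : (Nat.gcd h k : ℝ) ≤ ∑ t ∈ (Icc 1 M).filter (fun t => t ∣ h ∧ t ∣ k), (t : ℝ) :=
        Finset.single_le_sum (fun t _ => by positivity) hmem
      have hhk : (0:ℝ) < (h : ℝ) * k := by
        have : (0:ℝ) < (h:ℝ) := by exact_mod_cast hh1
        have : (0:ℝ) < (k:ℝ) := by exact_mod_cast hk1
        positivity
      calc (Nat.gcd h k : ℝ) / (h * k)
          ≤ (∑ t ∈ (Icc 1 M).filter (fun t => t ∣ h ∧ t ∣ k), (t : ℝ)) / (h * k) := by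
            gcongr
        _ = ∑ t ∈ (Icc 1 M).filter (fun t => t ∣ h ∧ t ∣ k),
              (t : ℝ) * ((1:ℝ)/h) * ((1:ℝ)/k) := by
            rw [Finset.sum_div]
            refine Finset.sum_congr rfl fun t _ => ?_
            field_simp
        _ = ∑ t ∈ Icc 1 M, (if t ∣ h ∧ t ∣ k then (t : ℝ) * ((1:ℝ)/h) * ((1:ℝ)/k) else 0) := by
            rw [Finset.sum_filter]
    refine step1.trans (le_of_eq ?_)
    refine Eq.trans Finset.sum_comm ?_
    refine Eq.trans (Finset.sum_congr rfl fun k _ => Finset.sum_comm) ?_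
    refine Eq.trans Finset.sum_comm ?_
    refine Finset.sum_congr rfl fun t _ => ?_
    have : ∀ h k : ℕ, (if t ∣ h ∧ t ∣ k then (t : ℝ) * ((1:ℝ)/h) * ((1:ℝ)/k) else 0) =
        (t : ℝ) * ((if t ∣ h then (1:ℝ)/h else 0) * (if t ∣ k then (1:ℝ)/k else 0)) := by
      intro h k
      by_cases h1 : t ∣ h <;> by_cases h2 : t ∣ k <;> simp [h1, h2] <;> ring
    simp_rw [this, ← Finset.mul_sum, ← Finset.sum_mul, ← Finset.sum_filter]
    rw [← Finset.mul_sum, ← Finset.sum_filter]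
    simp only [one_div]
    ring
  refine ⟨main, 27, by norm_num, fun M hM => ?_⟩
  have hM1 : 1 ≤ M := by omega
  have hlog : (0:ℝ) < Real.log M := by
    apply Real.log_pos
    exact_mod_cast by omega
  have hlog2 : 1 ≤ 2 * Real.log M := by
    have : Real.log 2 ≤ Real.log M := Real.log_le_log (by norm_num) (by exact_mod_cast hM)
    nlinarith [Real.log_two_gt_d9]
  have key : ∑ t ∈ Icc 1 M, (t : ℝ) * (∑ h ∈ (Icc 1 M).filter (fun h => t ∣ h), (1 : ℝ) / h) ^ 2
      ≤ (1 + Real.log M) ^ 3 := by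
    have step : ∀ t ∈ Icc 1 M, (t : ℝ) * (∑ h ∈ (Icc 1 M).filter (fun h => t ∣ h), (1 : ℝ) / h) ^ 2
        ≤ (1/t) * (1 + Real.log M) ^ 2 := by
      intro t htmem
      rw [mem_Icc] at htmem
      have ht1 : 1 ≤ t := htmem.1
      have ht0 : (0:ℝ) < t := by exact_mod_cast ht1
      have hS : (0:ℝ) ≤ ∑ h ∈ (Icc 1 M).filter (fun h => t ∣ h), (1 : ℝ) / h := by
        apply Finset.sum_nonneg
        intro h _
        positivity
      have hb := dsum_le M t ht1 hM1
      have hsq : (∑ h ∈ (Icc 1 M).filter (fun h => t ∣ h), (1 : ℝ) / h) ^ 2 ≤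
          ((1/t) * (1 + Real.log M)) ^ 2 := by
        apply pow_le_pow_left₀ hS hb
      calc (t : ℝ) * (∑ h ∈ (Icc 1 M).filter (fun h => t ∣ h), (1 : ℝ) / h) ^ 2
          ≤ (t : ℝ) * ((1/t) * (1 + Real.log M)) ^ 2 := by
            exact mul_le_mul_of_nonneg_left hsq (le_of_lt ht0)
        _ = (1/t) * (1 + Real.log M) ^ 2 := by
            field_simp
    calc ∑ t ∈ Icc 1 M, (t : ℝ) * (∑ h ∈ (Icc 1 M).filter (fun h => t ∣ h), (1 : ℝ) / h) ^ 2
        ≤ ∑ t ∈ Icc 1 M, (1/t) * (1 + Real.log M) ^ 2 := Finset.sum_le_sum step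
      _ = (∑ t ∈ Icc 1 M, (1:ℝ)/t) * (1 + Real.log M) ^ 2 := by rw [Finset.sum_mul]
      _ ≤ (1 + Real.log M) * (1 + Real.log M) ^ 2 := by
          apply mul_le_mul_of_nonneg_right (hsum_le M)
          positivity
      _ = (1 + Real.log M) ^ 3 := by ring
  refine (main M hM1).trans (key.trans ?_)
  have h3 : 1 + Real.log M ≤ 3 * Real.log M := by linarith
  calc (1 + Real.log M) ^ 3 ≤ (3 * Real.log M) ^ 3 := by
        apply pow_le_pow_left₀ (by linarith) h3
    _ = 27 * (Real.log M) ^ 3 := by ring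
end

section
/- Let λ > 0 and define for real t, T₁ < T₂ the function ω(t, T₁, T₂) = (e^λ / (2π)) ∫_{T₁}^{T₂} Γ(λ + i(u − t)) λ^{−(λ + i(u−t))} du. Then for all real t, |ω(t, T₁, T₂)| ≤ C λ^{-1/2} ∫_{T₁}^{T₂} exp(−(u−t)²/(2λ)·(1 + o(1))) du for an absolute constant C; in particular |ω(t, T₁, T₂)| is uniformly bounded. More precisely, |e^λ Γ(λ + iv) λ^{−(λ+iv)}| ≤ C λ^{−1/2} exp(−v²/(4λ)) for all real v with |v| ≤ λ and λ ≥ 2. -/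
open Real Complex Finset Filter

lemma exp_mul_log_two_le {x : ℝ} (hx : 0 ≤ x) (hx1 : x ≤ 1) :
    Real.exp (x * Real.log 2) ≤ 1 + x := by
  have h := convexOn_exp.2 (Set.mem_univ (0:ℝ)) (Set.mem_univ (Real.log 2))
    (by linarith : (0:ℝ) ≤ 1 - x) hx (by ring)
  simp only [smul_eq_mul, mul_zero, zero_add, Real.exp_zero, mul_one,
    Real.exp_log two_pos] at h
  linarith

lemma factor_bound {a v : ℝ} (ha : 0 < a) (hv : v ^ 2 ≤ a ^ 2) :
    a / Real.sqrt (a ^ 2 + v ^ 2) ≤ Real.exp (-(v ^ 2 / a ^ 2) * (Real.log 2 / 2)) := by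
  have hs : 0 < Real.sqrt (a ^ 2 + v ^ 2) := Real.sqrt_pos.2 (by positivity)
  have hL : 0 ≤ a / Real.sqrt (a ^ 2 + v ^ 2) := by positivity
  have key : (a / Real.sqrt (a ^ 2 + v ^ 2)) ^ 2 ≤ (Real.exp (-(v ^ 2 / a ^ 2) * (Real.log 2 / 2))) ^ 2 := by
    rw [div_pow, Real.sq_sqrt (by positivity), ← Real.exp_nat_mul]
    have h2 : Real.exp ((v ^ 2 / a ^ 2) * Real.log 2) ≤ 1 + v ^ 2 / a ^ 2 :=
      exp_mul_log_two_le (by positivity) (by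
        rw [div_le_one (by positivity)]; exact hv)
    have h3 : a ^ 2 / (a ^ 2 + v ^ 2) = 1 / (1 + v ^ 2 / a ^ 2) := by field_simp
    calc a ^ 2 / (a ^ 2 + v ^ 2) = 1 / (1 + v ^ 2 / a ^ 2) := h3
      _ ≤ 1 / Real.exp ((v ^ 2 / a ^ 2) * Real.log 2) :=
          one_div_le_one_div_of_le (Real.exp_pos _) h2
      _ = Real.exp (((2:ℕ):ℝ) * (-(v ^ 2 / a ^ 2) * (Real.log 2 / 2))) := by
          rw [one_div, ← Real.exp_neg]; ring_nf
  exact (pow_le_pow_iff_left₀ hL (Real.exp_pos _).le two_ne_zero).mp key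

lemma abs_shift (l v : ℝ) (j : ℕ) :
    ‖(l:ℂ) + v * I + j‖ = Real.sqrt ((l + j) ^ 2 + v ^ 2) := by
  have : (l:ℂ) + v * I + j = ((l + (j:ℝ) : ℝ) : ℂ) + (v:ℝ) * I := by push_cast; ring
  rw [this, Complex.norm_add_mul_I]

lemma prod_bound {l v : ℝ} (hl : 2 ≤ l) (hv : |v| ≤ l) :
    ∏ j ∈ range ⌈4 * l⌉₊, ((l + j) / ‖(l:ℂ) + v * I + j‖) ≤
      Real.exp (-v ^ 2 / (4 * l)) := by
  have hl0 : 0 < l := by linarith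
  set M := ⌈4 * l⌉₊ with hM
  have hMl : 4 * l ≤ M := Nat.le_ceil _
  have hv2 : v ^ 2 ≤ l ^ 2 := by
    have := _root_.sq_abs v ▸ pow_le_pow_left₀ (abs_nonneg v) hv 2
    simpa using this
  -- each factor bound
  have hstep : ∀ j ∈ range M, (l + j) / ‖(l:ℂ) + v * I + j‖ ≤
      Real.exp (-(v ^ 2 / (l + j) ^ 2) * (Real.log 2 / 2)) := by
    intro j _
    rw [abs_shift]
    exact factor_bound (by positivity) (le_trans hv2 (by nlinarith [Nat.cast_nonneg (α := ℝ) j]))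
  have hnn : ∀ j ∈ range M, 0 ≤ (l + j) / ‖(l:ℂ) + v * I + j‖ := by
    intro j _
    have : (0:ℝ) ≤ ‖(l:ℂ) + v * I + j‖ := norm_nonneg _
    positivity
  calc ∏ j ∈ range M, ((l + j) / ‖(l:ℂ) + v * I + j‖)
      ≤ ∏ j ∈ range M, Real.exp (-(v ^ 2 / (l + j) ^ 2) * (Real.log 2 / 2)) :=
        Finset.prod_le_prod hnn hstep
    _ = Real.exp (∑ j ∈ range M, -(v ^ 2 / (l + j) ^ 2) * (Real.log 2 / 2)) := by
        rw [Real.exp_sum]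
    _ ≤ Real.exp (-v ^ 2 / (4 * l)) := by
        apply Real.exp_le_exp.2
        have hsum : ∑ j ∈ range M, -(v ^ 2 / (l + j) ^ 2) * (Real.log 2 / 2) =
            -((Real.log 2 / 2) * ∑ j ∈ range M, v ^ 2 / (l + j) ^ 2) := by
          rw [Finset.mul_sum, ← Finset.sum_neg_distrib]
          apply Finset.sum_congr rfl; intro j _; ring
        rw [hsum]
        -- telescoping lower bound on the sum
        have tele : ∑ j ∈ range M, (1 / (l + j) - 1 / (l + (j + 1 : ℕ))) =
            1 / l - 1 / (l + M) := by
          have := Finset.sum_range_sub' (fun j : ℕ => 1 / (l + j)) M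
          simpa using this
        have hterm : ∀ j ∈ range M, 1 / (l + j) - 1 / (l + (j + 1 : ℕ)) ≤ 1 / (l + j) ^ 2 := by
          intro j _
          have hj : (0:ℝ) ≤ (j:ℝ) := Nat.cast_nonneg j
          have h1 : (0:ℝ) < l + j := by linarith
          have h2 : (0:ℝ) < l + (j + 1 : ℕ) := by push_cast; linarith
          have heq : 1 / (l + j) - 1 / (l + (j + 1 : ℕ)) = 1 / ((l + j) * (l + (j + 1 : ℕ))) := by
            push_cast
            field_simp
            ring
          rw [heq]
          apply one_div_le_one_div_of_le (by positivity)
          push_cast; nlinarith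
        have hT : 1 / l - 1 / (l + M) ≤ ∑ j ∈ range M, 1 / (l + j) ^ 2 :=
          tele ▸ Finset.sum_le_sum hterm
        have hlM : 5 * l ≤ l + M := by linarith
        have h15 : 1 / (l + M) ≤ 1 / (5 * l) := by
          apply one_div_le_one_div_of_le (by positivity) hlM
        have hT2 : (4 / 5) / l ≤ ∑ j ∈ range M, 1 / (l + j) ^ 2 := by
          have : (4 / 5) / l = 1 / l - 1 / (5 * l) := by field_simp; ring
          linarith
        have hsum2 : ∑ j ∈ range M, v ^ 2 / (l + j) ^ 2 =
            v ^ 2 * ∑ j ∈ range M, 1 / (l + j) ^ 2 := by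
          rw [Finset.mul_sum]; apply Finset.sum_congr rfl; intro j _; ring
        rw [hsum2]
        have hlog : (0.6931471803 : ℝ) < Real.log 2 := Real.log_two_gt_d9
        have hv0 : (0:ℝ) ≤ v ^ 2 := sq_nonneg v
        have hfin : v ^ 2 / (4 * l) ≤ Real.log 2 / 2 * (v ^ 2 * ((4 / 5) / l)) := by
          rw [div_le_iff₀ (by positivity)]
          have : Real.log 2 / 2 * (v ^ 2 * ((4 / 5) / l)) * (4 * l) =
              v ^ 2 * (Real.log 2 * (8 / 5)) := by field_simp; ring
          rw [this]
          nlinarith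
        have hmono : v ^ 2 * ((4 / 5) / l) ≤ v ^ 2 * ∑ j ∈ range M, 1 / (l + j) ^ 2 :=
          mul_le_mul_of_nonneg_left hT2 hv0
        have h6 := le_trans hfin (by nlinarith [hmono] : Real.log 2 / 2 * (v ^ 2 * ((4/5)/l)) ≤ Real.log 2 / 2 * (v ^ 2 * ∑ j ∈ range M, 1 / (l + j) ^ 2))
        have h7 : -v ^ 2 / (4 * l) = -(v ^ 2 / (4 * l)) := neg_div _ _
        rw [h7]
        linarith

lemma gamma_abs_le {l v : ℝ} (hl : 2 ≤ l) (hv : |v| ≤ l) :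
    ‖Complex.Gamma ((l:ℂ) + v * I)‖ ≤
      Real.Gamma l * Real.exp (-v ^ 2 / (4 * l)) := by
  have hl0 : 0 < l := by linarith
  set M := ⌈4 * l⌉₊ with hMdef
  set s : ℂ := (l:ℂ) + v * I with hs
  set P : ℝ := ∏ j ∈ range M, ((l + j) / ‖(l:ℂ) + v * I + j‖) with hP
  have habsge : ∀ j : ℕ, (l + j) ≤ ‖(l:ℂ) + v * I + j‖ := by
    intro j
    rw [abs_shift]
    have h1 : (0:ℝ) ≤ l + j := by positivity
    calc l + (j:ℝ) = Real.sqrt ((l + j) ^ 2) := (Real.sqrt_sq h1).symm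
      _ ≤ Real.sqrt ((l + j) ^ 2 + v ^ 2) := Real.sqrt_le_sqrt (by nlinarith [sq_nonneg v])
  have habspos : ∀ j : ℕ, (0:ℝ) < ‖(l:ℂ) + v * I + j‖ := by
    intro j
    have := habsge j
    have : (0:ℝ) < l + j := by positivity
    linarith [habsge j]
  have hPnn : 0 ≤ P := Finset.prod_nonneg fun j _ => by positivity
  -- eventual inequality
  have hev : ∀ᶠ n in atTop, ‖Complex.GammaSeq s n‖ ≤ Real.GammaSeq l n * P := by
    rw [eventually_atTop]
    refine ⟨max 1 M, fun n hn => ?_⟩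
    have hn1 : 1 ≤ n := le_trans (le_max_left _ _) hn
    have hnM : M ≤ n := le_trans (le_max_right _ _) hn
    have hnpos : (0:ℝ) < n := by exact_mod_cast hn1
    -- compute the modulus of GammaSeq
    have habs : ‖Complex.GammaSeq s n‖ =
        (n:ℝ) ^ l * (n.factorial : ℝ) / ∏ j ∈ range (n + 1), ‖(l:ℂ) + v * I + j‖ := by
      rw [Complex.GammaSeq, norm_div, norm_mul, norm_prod]
      congr 1
      · congr 1
        · have : ((n:ℂ)) = (((n:ℝ)):ℂ) := by push_cast; rfl
          rw [this, Complex.norm_cpow_eq_rpow_re_of_pos hnpos]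
          congr 1
          simp [hs]
        · simp
    -- GammaSeq l n * Q n equals the modulus, where Q is the full ratio product
    have hprodpos : (0:ℝ) < ∏ j ∈ range (n + 1), (l + j) :=
      Finset.prod_pos fun j _ => by positivity
    have habsprodpos : (0:ℝ) < ∏ j ∈ range (n + 1), ‖(l:ℂ) + v * I + j‖ :=
      Finset.prod_pos fun j _ => habspos j
    have hQ : Real.GammaSeq l n * (∏ j ∈ range (n + 1), ((l + j) / ‖(l:ℂ) + v * I + j‖))
        = (n:ℝ) ^ l * (n.factorial : ℝ) / ∏ j ∈ range (n + 1), ‖(l:ℂ) + v * I + j‖ := by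
      rw [Real.GammaSeq, Finset.prod_div_distrib]
      field_simp
    -- truncation
    have htrunc : (∏ j ∈ range (n + 1), ((l + j) / ‖(l:ℂ) + v * I + j‖)) ≤ P := by
      rw [← Finset.prod_range_mul_prod_Ico _ (le_trans hnM (Nat.le_succ n)), ← hP]
      have hle1 : ∏ j ∈ Finset.Ico M (n + 1), ((l + j) / ‖(l:ℂ) + v * I + j‖) ≤ 1 := by
        apply Finset.prod_le_one
        · intro j _; have := habspos j; positivity
        · intro j _
          rw [div_le_one (habspos j)]
          exact habsge j
      have h0 : 0 ≤ ∏ j ∈ Finset.Ico M (n + 1), ((l + j) / ‖(l:ℂ) + v * I + j‖) :=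
        Finset.prod_nonneg fun j _ => by have := habspos j; positivity
      calc P * ∏ j ∈ Finset.Ico M (n + 1), ((l + j) / ‖(l:ℂ) + v * I + j‖)
          ≤ P * 1 := mul_le_mul_of_nonneg_left hle1 hPnn
        _ = P := mul_one P
    have hGnn : 0 ≤ Real.GammaSeq l n := by
      rw [Real.GammaSeq]
      positivity
    calc ‖Complex.GammaSeq s n‖
        = Real.GammaSeq l n * (∏ j ∈ range (n + 1), ((l + j) / ‖(l:ℂ) + v * I + j‖)) := by
          rw [habs, hQ]
      _ ≤ Real.GammaSeq l n * P := mul_le_mul_of_nonneg_left htrunc hGnn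
  have h1 : Tendsto (fun n => ‖Complex.GammaSeq s n‖) atTop
      (nhds (‖Complex.Gamma s‖)) :=
    (continuous_norm.tendsto _).comp (Complex.GammaSeq_tendsto_Gamma s)
  have h2 : Tendsto (fun n => Real.GammaSeq l n * P) atTop (nhds (Real.Gamma l * P)) :=
    (Real.GammaSeq_tendsto_Gamma l).mul_const P
  have hfin : ‖Complex.Gamma s‖ ≤ Real.Gamma l * P :=
    le_of_tendsto_of_tendsto h1 h2 hev
  calc ‖Complex.Gamma s‖ ≤ Real.Gamma l * P := hfin
    _ ≤ Real.Gamma l * Real.exp (-v ^ 2 / (4 * l)) :=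
      mul_le_mul_of_nonneg_left (prod_bound hl hv) (Real.Gamma_pos_of_pos hl0).le

lemma factorial_stirling_le {n : ℕ} (hn : 1 ≤ n) :
    (n.factorial : ℝ) ≤ Real.exp 1 * Real.sqrt n * ((n : ℝ) / Real.exp 1) ^ n := by
  obtain ⟨m, rfl⟩ := Nat.exists_eq_add_of_le hn
  have h := Stirling.stirlingSeq'_antitone (Nat.zero_le m)
  simp only [Function.comp] at h
  rw [Stirling.stirlingSeq_one] at h
  -- h : stirlingSeq (m+1) ≤ exp 1 / √2  (check direction)
  have hpos : (0:ℝ) < Real.sqrt (2 * (m + 1)) * (((m:ℝ) + 1) / Real.exp 1) ^ (m + 1) := by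
    positivity
  have hdef : Stirling.stirlingSeq (m + 1) =
      ((m + 1).factorial : ℝ) / (Real.sqrt (2 * (m + 1)) * (((m:ℝ) + 1) / Real.exp 1) ^ (m + 1)) := by
    rw [Stirling.stirlingSeq]
    push_cast
    ring_nf
  have hfact : ((m + 1).factorial : ℝ) =
      Stirling.stirlingSeq (m + 1) * (Real.sqrt (2 * (m + 1)) * (((m:ℝ) + 1) / Real.exp 1) ^ (m + 1)) := by
    rw [hdef, div_mul_cancel₀]
    exact hpos.ne'
  rw [add_comm 1 m] at *
  rw [hfact]
  have hsqrt : Real.sqrt (2 * (m + 1)) = Real.sqrt 2 * Real.sqrt ((m:ℝ) + 1) := by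
    rw [← Real.sqrt_mul (by norm_num)]

  calc Stirling.stirlingSeq (m + 1) * (Real.sqrt (2 * (m + 1)) * (((m:ℝ) + 1) / Real.exp 1) ^ (m + 1))
      ≤ (Real.exp 1 / Real.sqrt 2) * (Real.sqrt (2 * (m + 1)) * (((m:ℝ) + 1) / Real.exp 1) ^ (m + 1)) := by
        apply mul_le_mul_of_nonneg_right h hpos.le
    _ = Real.exp 1 * Real.sqrt ((m:ℝ) + 1) * (((m:ℝ) + 1) / Real.exp 1) ^ (m + 1) := by
        rw [hsqrt]
        have h2 : Real.sqrt 2 ≠ 0 := by positivity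
        field_simp
    _ = Real.exp 1 * Real.sqrt ((m + 1 : ℕ) : ℝ) * (((m + 1 : ℕ) : ℝ) / Real.exp 1) ^ (m + 1) := by
        push_cast; ring

lemma gamma_stirling_le {l : ℝ} (hl : 2 ≤ l) :
    Real.Gamma l ≤ Real.exp 2 * l ^ (l - 1/2 : ℝ) * Real.exp (-l) := by
  have hl0 : (0:ℝ) < l := by linarith
  have hn2 : 2 ≤ ⌊l⌋₊ := Nat.le_floor (by exact_mod_cast hl)
  obtain ⟨k, hk⟩ : ∃ k, ⌊l⌋₊ = k + 1 := ⟨⌊l⌋₊ - 1, by omega⟩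
  set x : ℝ := (k:ℝ) + 1 with hxdef
  have hx2 : (2:ℝ) ≤ x := by
    have : ((2:ℕ):ℝ) ≤ ((⌊l⌋₊ : ℕ) : ℝ) := by exact_mod_cast hn2
    rw [hk] at this; push_cast at this; linarith
  have hx0 : (0:ℝ) < x := by linarith
  have hxl : x ≤ l := by
    have := Nat.floor_le hl0.le
    rw [hk] at this; push_cast at this; linarith
  set t : ℝ := l - x with htdef
  have ht0 : 0 ≤ t := by simp [htdef]; linarith
  have ht1 : t ≤ 1 := by
    have := Nat.lt_floor_add_one l
    rw [hk] at this; push_cast at this; simp [htdef]; linarith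
  have hkfac : (0:ℝ) < (k.factorial : ℝ) := by exact_mod_cast k.factorial_pos
  -- log-convexity step : Γ l ≤ k! * x ^ t
  have hconv := Real.convexOn_log_Gamma.2 (Set.mem_Ioi.2 hx0)
    (Set.mem_Ioi.2 (by linarith : (0:ℝ) < x + 1)) (by linarith : (0:ℝ) ≤ 1 - t) ht0 (by ring)
  simp only [smul_eq_mul, Function.comp_apply] at hconv
  have harg : (1 - t) * x + t * (x + 1) = l := by rw [htdef]; ring
  rw [harg] at hconv
  have hGx : Real.Gamma x = (k.factorial : ℝ) := Real.Gamma_nat_eq_factorial k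
  have hGx1 : Real.Gamma (x + 1) = ((k+1).factorial : ℝ) := by
    have := Real.Gamma_nat_eq_factorial (k + 1)
    push_cast at this ⊢
    rw [hxdef]
    convert this using 2
  rw [hGx, hGx1] at hconv
  have hfs : Real.log ((k+1).factorial : ℝ) = Real.log x + Real.log (k.factorial : ℝ) := by
    rw [Nat.factorial_succ]
    push_cast
    rw [Real.log_mul (by positivity) (by positivity)]
  rw [hfs] at hconv
  have hconv2 : Real.log (Real.Gamma l) ≤ Real.log (k.factorial : ℝ) + t * Real.log x := by
    nlinarith [hconv]
  have hB : Real.Gamma l ≤ (k.factorial : ℝ) * x ^ (t : ℝ) := by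
    have h := Real.exp_le_exp.2 hconv2
    rw [Real.exp_log (Real.Gamma_pos_of_pos hl0), Real.exp_add, Real.exp_log hkfac] at h
    rwa [Real.rpow_def_of_pos hx0, mul_comm (Real.log x) t]
  -- Stirling step : k! ≤ e * x^(x - 1/2) * exp (-x)
  have hA : (k.factorial : ℝ) ≤ Real.exp 1 * x ^ (x - 1/2 : ℝ) * Real.exp (-x) := by
    have hfb := factorial_stirling_le (n := k + 1) (Nat.le_add_left 1 k)
    have hcast : ((k + 1 : ℕ) : ℝ) = x := by push_cast [hxdef]; ring
    rw [hcast] at hfb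
    have hkx : (k.factorial : ℝ) = ((k+1).factorial : ℝ) / x := by
      rw [Nat.factorial_succ]; push_cast; rw [hxdef]; field_simp
    rw [hkx]
    rw [div_le_iff₀ hx0]
    calc ((k+1).factorial : ℝ) ≤ Real.exp 1 * Real.sqrt x * (x / Real.exp 1) ^ (k + 1) := hfb
      _ = Real.exp 1 * x ^ (x - 1/2 : ℝ) * Real.exp (-x) * x := by
          rw [Real.sqrt_eq_rpow, div_pow, ← Real.rpow_natCast x (k+1), hcast,
            Real.exp_one_pow, hcast]
          rw [Real.exp_neg]
          rw [div_eq_mul_inv]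
          have hxx : x ^ (1/2 : ℝ) * x ^ (x : ℝ) = x ^ (x - 1/2 : ℝ) * x := by
            have h9 : x ^ (x - 1/2 : ℝ) * x ^ (1:ℝ) = x ^ (1/2:ℝ) * x ^ (x:ℝ) := by
              rw [← Real.rpow_add hx0, ← Real.rpow_add hx0]; ring_nf
            rw [← h9, Real.rpow_one]
          calc Real.exp 1 * x ^ (1/2:ℝ) * (x ^ (x:ℝ) * (Real.exp x)⁻¹)
              = Real.exp 1 * (x ^ (1/2:ℝ) * x ^ (x:ℝ)) * (Real.exp x)⁻¹ := by ring
            _ = Real.exp 1 * (x ^ (x - 1/2 : ℝ) * x) * (Real.exp x)⁻¹ := by rw [hxx]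
            _ = Real.exp 1 * x ^ (x - 1/2 : ℝ) * (Real.exp x)⁻¹ * x := by ring
  -- combine
  have hxt : x ^ (t:ℝ) = x ^ (t:ℝ) := rfl
  calc Real.Gamma l ≤ (k.factorial : ℝ) * x ^ (t : ℝ) := hB
    _ ≤ (Real.exp 1 * x ^ (x - 1/2 : ℝ) * Real.exp (-x)) * x ^ (t:ℝ) := by
        apply mul_le_mul_of_nonneg_right hA (Real.rpow_nonneg hx0.le _)
    _ = Real.exp 1 * x ^ (l - 1/2 : ℝ) * Real.exp (-x) := by
        rw [show Real.exp 1 * x ^ (x - 1/2 : ℝ) * Real.exp (-x) * x ^ (t:ℝ)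
            = Real.exp 1 * (x ^ (x - 1/2 : ℝ) * x ^ (t:ℝ)) * Real.exp (-x) by ring,
          ← Real.rpow_add hx0]
        rw [htdef]; ring_nf
    _ ≤ Real.exp 1 * l ^ (l - 1/2 : ℝ) * Real.exp (-x) := by
        have h8 := Real.rpow_le_rpow hx0.le hxl (by linarith : (0:ℝ) ≤ l - 1/2)
        exact mul_le_mul_of_nonneg_right
          (mul_le_mul_of_nonneg_left h8 (Real.exp_pos 1).le) (Real.exp_pos (-x)).le
    _ ≤ Real.exp 2 * l ^ (l - 1/2 : ℝ) * Real.exp (-l) := by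
        have hex : Real.exp (-x) = Real.exp t * Real.exp (-l) := by
          rw [← Real.exp_add]; congr 1; rw [htdef]; ring
        rw [hex]
        have het : Real.exp t ≤ Real.exp 1 := Real.exp_le_exp.2 ht1
        have h2 : Real.exp 1 * Real.exp 1 = Real.exp 2 := by
          rw [← Real.exp_add]; norm_num
        have hrp : (0:ℝ) ≤ l ^ (l - 1/2 : ℝ) := Real.rpow_nonneg hl0.le _
        calc Real.exp 1 * l ^ (l - 1/2 : ℝ) * (Real.exp t * Real.exp (-l))
            = Real.exp t * (Real.exp 1 * l ^ (l - 1/2 : ℝ) * Real.exp (-l)) := by ring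
          _ ≤ Real.exp 1 * (Real.exp 1 * l ^ (l - 1/2 : ℝ) * Real.exp (-l)) :=
              mul_le_mul_of_nonneg_right het
                (mul_nonneg (mul_nonneg (Real.exp_pos 1).le hrp) (Real.exp_pos (-l)).le)
          _ = Real.exp 2 * l ^ (l - 1/2 : ℝ) * Real.exp (-l) := by rw [← h2]; ring


theorem gamma_gaussian_pointwise_bound :
    ∃ C : ℝ, 0 < C ∧ ∀ l v : ℝ, 2 ≤ l → |v| ≤ l →
      ‖Complex.exp (l : ℂ) * Complex.Gamma ((l : ℂ) + v * I) *
          (l : ℂ) ^ (-((l : ℂ) + v * I))‖ ≤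
        C * l ^ (-(1/2) : ℝ) * Real.exp (-v ^ 2 / (4 * l)) := by
  refine ⟨Real.exp 2, Real.exp_pos 2, fun l v hl hv => ?_⟩
  have hl0 : (0:ℝ) < l := by linarith
  rw [norm_mul, norm_mul, Complex.norm_exp]
  have h2 : ‖(l:ℂ) ^ (-((l:ℂ) + v * I))‖ = l ^ (-l : ℝ) := by
    rw [Complex.norm_cpow_eq_rpow_re_of_pos hl0]
    congr 1
    simp
  rw [h2, Complex.ofReal_re]
  have hE : (0:ℝ) < Real.exp (-v ^ 2 / (4 * l)) := Real.exp_pos _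
  have hll : l ^ (l - 1/2 : ℝ) * l ^ (-l : ℝ) = l ^ (-(1/2) : ℝ) := by
    rw [← Real.rpow_add hl0]; ring_nf
  have hee : Real.exp l * Real.exp (-l) = 1 := by
    rw [← Real.exp_add]; simp
  calc Real.exp l * ‖Complex.Gamma ((l:ℂ) + v * I)‖ * l ^ (-l : ℝ)
      ≤ Real.exp l * (Real.Gamma l * Real.exp (-v ^ 2 / (4 * l))) * l ^ (-l : ℝ) :=
        mul_le_mul_of_nonneg_right
          (mul_le_mul_of_nonneg_left (gamma_abs_le hl hv) (Real.exp_pos l).le)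
          (Real.rpow_nonneg hl0.le _)
    _ ≤ Real.exp l * ((Real.exp 2 * l ^ (l - 1/2 : ℝ) * Real.exp (-l)) *
          Real.exp (-v ^ 2 / (4 * l))) * l ^ (-l : ℝ) := by
        apply mul_le_mul_of_nonneg_right _ (Real.rpow_nonneg hl0.le _)
        apply mul_le_mul_of_nonneg_left _ (Real.exp_pos l).le
        exact mul_le_mul_of_nonneg_right (gamma_stirling_le hl) hE.le
    _ = (Real.exp l * Real.exp (-l)) * (l ^ (l - 1/2 : ℝ) * l ^ (-l : ℝ)) *
          (Real.exp 2 * Real.exp (-v ^ 2 / (4 * l))) := by ring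
    _ = Real.exp 2 * l ^ (-(1/2) : ℝ) * Real.exp (-v ^ 2 / (4 * l)) := by
        rw [hee, hll]; ring
end

section
/- Let λ ≥ 2, c real with 1 < c < 2, 0 < θ < 1/2, and λ' = λ cos δ with 0 < δ < π/2 satisfying λ' ≥ λ − 1. Then e^λ ∫_0^{1−θ} x^{λ − c − 2} e^{−λ' x} dx ≤ e^{λ(1 − cos δ)} · e^{λ} ∫_0^{1−θ} x^{λ−c−2} e^{−λx} dx ≤ C e^{λ(1−cos δ)} e^{−λ θ²/4} for λ sufficiently large in terms of c, θ (e.g. λ ≥ 4(c+2)/θ²), where C is absolute. -/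
open Real MeasureTheory

lemma log_one_sub_le_aux (t : ℝ) (h0 : 0 ≤ t) (h1 : t < 1) :
    Real.log (1 - t) ≤ -t - t ^ 2 / 2 := by
  have hderiv : ∀ s ∈ Set.uIcc (0:ℝ) t,
      HasDerivAt (fun u : ℝ => -Real.log (1 - u)) ((1 - s)⁻¹) s := by
    intro s hs
    rw [Set.uIcc_of_le h0] at hs
    have hspos : 0 < 1 - s := by
      have := hs.2; linarith
    have h1s : HasDerivAt (fun u : ℝ => 1 - u) (-1) s := by
      simpa using ((hasDerivAt_id s).const_sub 1)
    have hlog : HasDerivAt (fun u : ℝ => Real.log (1 - u)) ((1 - s)⁻¹ * (-1)) s :=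
      (Real.hasDerivAt_log (ne_of_gt hspos)).comp s h1s
    have := hlog.neg
    convert this using 1
    · rfl
    · rfl
    · rfl
    · ring
  have hintegrable : IntervalIntegrable (fun s : ℝ => (1 - s)⁻¹) volume 0 t := by
    apply ContinuousOn.intervalIntegrable
    apply ContinuousOn.inv₀
    · exact (continuous_const.sub continuous_id).continuousOn
    · intro s hs
      rw [Set.uIcc_of_le h0] at hs
      have := hs.2
      intro h; nlinarith
  have hFTC := intervalIntegral.integral_eq_sub_of_hasDerivAt hderiv hintegrable
  simp only [sub_zero, Real.log_one, neg_zero] at hFTC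
  have hmono : ∫ s in (0:ℝ)..t, (1 + s) ≤ ∫ s in (0:ℝ)..t, (1 - s)⁻¹ := by
    apply intervalIntegral.integral_mono_on h0 _ hintegrable
    · intro s hs
      have hs0 := hs.1
      have hs1 := hs.2
      have hspos : 0 < 1 - s := by linarith
      rw [inv_eq_one_div, le_div_iff₀ hspos]
      nlinarith
    · exact (continuous_const.add continuous_id).intervalIntegrable 0 t
  have hval : ∫ s in (0:ℝ)..t, (1 + s) = t + t ^ 2 / 2 := by
    have : ∫ s in (0:ℝ)..t, (1 + s) =
        (∫ s in (0:ℝ)..t, (1:ℝ)) + ∫ s in (0:ℝ)..t, s := by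
      apply intervalIntegral.integral_add
      · exact intervalIntegrable_const
      · exact intervalIntegral.intervalIntegrable_id
    rw [this]
    simp [integral_id]
  have : t + t ^ 2 / 2 ≤ -Real.log (1 - t) := by
    rw [← hval]
    calc ∫ s in (0:ℝ)..t, (1 + s) ≤ ∫ s in (0:ℝ)..t, (1 - s)⁻¹ := hmono
      _ = -Real.log (1 - t) := hFTC
  linarith

theorem W1_estimate :
    ∃ C : ℝ, 0 < C ∧ ∀ l c θ δ : ℝ, 2 ≤ l → 1 < c → c < 2 → 0 < θ → θ < 1/2 →
      0 < δ → δ < π / 2 → l - 1 ≤ l * Real.cos δ → 4 * (c + 2) / θ ^ 2 ≤ l →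
      (Real.exp l * ∫ x in (0:ℝ)..(1 - θ), x ^ (l - c - 2) * Real.exp (-(l * Real.cos δ) * x) ≤
        Real.exp (l * (1 - Real.cos δ)) *
          (Real.exp l * ∫ x in (0:ℝ)..(1 - θ), x ^ (l - c - 2) * Real.exp (-l * x))) ∧
      (Real.exp (l * (1 - Real.cos δ)) *
          (Real.exp l * ∫ x in (0:ℝ)..(1 - θ), x ^ (l - c - 2) * Real.exp (-l * x)) ≤
        C * Real.exp (l * (1 - Real.cos δ)) * Real.exp (-l * θ ^ 2 / 4)) := by
  refine ⟨Real.exp (1/2), Real.exp_pos _, ?_⟩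
  intro l c θ δ hl hc1 hc2 hθ0 hθh hδ0 hδπ hcosδ hlge
  have hθ1 : θ < 1 := by linarith
  have hb : (0:ℝ) ≤ 1 - θ := by linarith
  have hθsq : 0 < θ ^ 2 := by positivity
  have hlθ : 4 * (c + 2) ≤ l * θ ^ 2 := by
    rw [div_le_iff₀ hθsq] at hlge
    linarith
  have hθsq4 : θ ^ 2 < 1 / 4 := by nlinarith
  have hp : 0 < l - c - 2 := by nlinarith
  have hcos1 : Real.cos δ ≤ 1 := Real.cos_le_one δ
  -- continuity / integrability
  have hcont : ∀ a : ℝ, ContinuousOn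
      (fun x : ℝ => x ^ (l - c - 2) * Real.exp (-a * x)) (Set.Icc 0 (1 - θ)) := by
    intro a
    apply ContinuousOn.mul
    · apply ContinuousOn.rpow_const continuousOn_id
      intro x _
      right; linarith
    · exact (Real.continuous_exp.comp (continuous_const.mul continuous_id)).continuousOn
  have hint : ∀ a : ℝ, IntervalIntegrable
      (fun x : ℝ => x ^ (l - c - 2) * Real.exp (-a * x)) volume 0 (1 - θ) := by
    intro a
    apply ContinuousOn.intervalIntegrable
    rw [Set.uIcc_of_le hb]
    exact hcont a
  constructor
  · -- Part 1
    have key1 : (∫ x in (0:ℝ)..(1 - θ), x ^ (l - c - 2) * Real.exp (-(l * Real.cos δ) * x)) ≤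
        ∫ x in (0:ℝ)..(1 - θ),
          Real.exp (l * (1 - Real.cos δ)) * (x ^ (l - c - 2) * Real.exp (-l * x)) := by
      apply intervalIntegral.integral_mono_on hb (hint (l * Real.cos δ))
        ((hint l).const_mul _)
      intro x hx
      have hx0 := hx.1
      have hx1 : x ≤ 1 := by linarith [hx.2]
      have hxp : (0:ℝ) ≤ x ^ (l - c - 2) := Real.rpow_nonneg hx0 _
      have hexp : Real.exp (-(l * Real.cos δ) * x) ≤
          Real.exp (l * (1 - Real.cos δ)) * Real.exp (-l * x) := by
        rw [← Real.exp_add]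
        apply Real.exp_le_exp.2
        nlinarith [mul_nonneg (mul_nonneg (by linarith : (0:ℝ) ≤ l) (by linarith : (0:ℝ) ≤ 1 - Real.cos δ)) (by linarith : (0:ℝ) ≤ 1 - x)]
      calc x ^ (l - c - 2) * Real.exp (-(l * Real.cos δ) * x)
          ≤ x ^ (l - c - 2) * (Real.exp (l * (1 - Real.cos δ)) * Real.exp (-l * x)) :=
            mul_le_mul_of_nonneg_left hexp hxp
        _ = Real.exp (l * (1 - Real.cos δ)) * (x ^ (l - c - 2) * Real.exp (-l * x)) := by ring
    rw [intervalIntegral.integral_const_mul] at key1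
    calc Real.exp l * ∫ x in (0:ℝ)..(1 - θ), x ^ (l - c - 2) * Real.exp (-(l * Real.cos δ) * x)
        ≤ Real.exp l * (Real.exp (l * (1 - Real.cos δ)) *
            ∫ x in (0:ℝ)..(1 - θ), x ^ (l - c - 2) * Real.exp (-l * x)) :=
          mul_le_mul_of_nonneg_left key1 (Real.exp_pos l).le
      _ = Real.exp (l * (1 - Real.cos δ)) *
            (Real.exp l * ∫ x in (0:ℝ)..(1 - θ), x ^ (l - c - 2) * Real.exp (-l * x)) := by ring
  · -- Part 2
    set K : ℝ := Real.exp (1/2 - l - l * θ ^ 2 / 4) with hK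
    have hpt : ∀ x ∈ Set.Icc (0:ℝ) (1 - θ),
        x ^ (l - c - 2) * Real.exp (-l * x) ≤ K := by
      intro x hx
      have hx0 := hx.1
      have hx1 : x ≤ 1 - θ := hx.2
      rcases eq_or_lt_of_le hx0 with h0 | h0
      · rw [← h0, Real.zero_rpow (ne_of_gt hp)]
        simp [hK]
        positivity
      · rw [Real.rpow_def_of_pos h0, ← Real.exp_add, hK]
        apply Real.exp_le_exp.2
        have hlog : Real.log x ≤ x - 1 - θ ^ 2 / 2 := by
          have h1x0 : 0 ≤ 1 - x := by linarith
          have h1x1 : 1 - x < 1 := by linarith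
          have := log_one_sub_le_aux (1 - x) h1x0 h1x1
          have hsq : θ ^ 2 ≤ (1 - x) ^ 2 := by nlinarith
          simp only [sub_sub_cancel] at this
          nlinarith
        have hmul : (l - c - 2) * Real.log x ≤ (l - c - 2) * (x - 1 - θ ^ 2 / 2) :=
          mul_le_mul_of_nonneg_left hlog hp.le
        nlinarith [mul_le_mul_of_nonneg_left hθsq4.le (by linarith : (0:ℝ) ≤ c + 2),
          mul_nonneg (by linarith : (0:ℝ) ≤ c + 2) hx0]
    have key2 : (∫ x in (0:ℝ)..(1 - θ), x ^ (l - c - 2) * Real.exp (-l * x)) ≤ K := by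
      have h1 : (∫ x in (0:ℝ)..(1 - θ), x ^ (l - c - 2) * Real.exp (-l * x)) ≤
          ∫ _x in (0:ℝ)..(1 - θ), K :=
        intervalIntegral.integral_mono_on hb (hint l) intervalIntegrable_const hpt
      rw [intervalIntegral.integral_const, smul_eq_mul] at h1
      have hKpos : 0 < K := Real.exp_pos _
      nlinarith
    have hstep : Real.exp l *
        (∫ x in (0:ℝ)..(1 - θ), x ^ (l - c - 2) * Real.exp (-l * x)) ≤
        Real.exp (1/2) * Real.exp (-l * θ ^ 2 / 4) := by
      calc Real.exp l * (∫ x in (0:ℝ)..(1 - θ), x ^ (l - c - 2) * Real.exp (-l * x))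
          ≤ Real.exp l * K := mul_le_mul_of_nonneg_left key2 (Real.exp_pos l).le
        _ = Real.exp (1/2) * Real.exp (-l * θ ^ 2 / 4) := by
            rw [hK, ← Real.exp_add, ← Real.exp_add]
            ring_nf
    calc Real.exp (l * (1 - Real.cos δ)) *
          (Real.exp l * ∫ x in (0:ℝ)..(1 - θ), x ^ (l - c - 2) * Real.exp (-l * x))
        ≤ Real.exp (l * (1 - Real.cos δ)) * (Real.exp (1/2) * Real.exp (-l * θ ^ 2 / 4)) :=
          mul_le_mul_of_nonneg_left hstep (Real.exp_pos _).le
      _ = Real.exp (1/2) * Real.exp (l * (1 - Real.cos δ)) * Real.exp (-l * θ ^ 2 / 4) := by ring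
end

section
/- For λ ≥ 2 and 0 < θ < 1/2, and real exponent a ≥ 0 with λ ≥ 4(a+2)/θ², one has e^λ ∫_{1+θ}^{∞} x^{λ + a} e^{−λ x} dx ≤ C e^{−λ θ²/8} for an absolute constant C. -/
open Real MeasureTheory

lemma W3_log_aux {θ : ℝ} (h0 : 0 < θ) (h1 : θ < 1/2) :
    Real.log (1 + θ) ≤ θ - θ ^ 2 / 4 := by
  have hy : (0:ℝ) ≤ (θ - θ ^ 2 / 4) / 3 := by nlinarith
  have h := Real.add_one_le_exp ((θ - θ ^ 2 / 4) / 3)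
  have h3 : Real.exp (θ - θ ^ 2 / 4) = (Real.exp ((θ - θ ^ 2 / 4) / 3)) ^ 3 := by
    rw [← Real.exp_nat_mul]
    norm_num
    ring
  have hcube : ((θ - θ ^ 2 / 4) / 3 + 1) ^ 3 ≤ (Real.exp ((θ - θ ^ 2 / 4) / 3)) ^ 3 := by
    apply pow_le_pow_left₀ (by linarith) h
  have hlow : 1 + θ ≤ ((θ - θ ^ 2 / 4) / 3 + 1) ^ 3 := by nlinarith [sq_nonneg θ, sq_nonneg (θ - θ^2/4)]
  have : 1 + θ ≤ Real.exp (θ - θ ^ 2 / 4) := by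
    rw [h3]; exact hlow.trans hcube
  calc Real.log (1 + θ) ≤ Real.log (Real.exp (θ - θ ^ 2 / 4)) :=
        Real.log_le_log (by linarith) this
    _ = θ - θ ^ 2 / 4 := Real.log_exp _

lemma W3_exp_integral (c K : ℝ) (hK : 0 < K) :
    ∫ x in Set.Ioi c, Real.exp (-(K * x)) = Real.exp (-(K * c)) / K := by
  have h := MeasureTheory.integral_comp_mul_left_Ioi (fun y => Real.exp (-y)) c hK
  simp only [smul_eq_mul] at h
  rw [h, integral_exp_neg_Ioi]
  field_simp

theorem W3_estimate :
    ∃ C : ℝ, 0 < C ∧ ∀ l θ a : ℝ, 2 ≤ l → 0 < θ → θ < 1/2 → 0 ≤ a →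
      4 * (a + 2) / θ ^ 2 ≤ l →
      Real.exp l * ∫ x in Set.Ioi (1 + θ), x ^ (l + a) * Real.exp (-l * x) ≤
        C * Real.exp (-l * θ ^ 2 / 8) := by
  refine ⟨1, one_pos, ?_⟩
  intro l θ a hl hθ hθ2 ha hla
  have hθ2' : (0:ℝ) < θ ^ 2 := by positivity
  have hla' : 4 * (a + 2) ≤ l * θ ^ 2 := by
    have := (div_le_iff₀ hθ2').mp hla
    linarith
  have hal : a ≤ l * θ ^ 2 / 4 - 2 := by linarith
  have hl0 : (0:ℝ) < l := by linarith
  have hlθ : 16 ≤ l * θ := by nlinarith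
  set c : ℝ := 1 + θ with hc_def
  have hc : (0:ℝ) < c := by simp only [hc_def]; linarith
  have hc1 : (1:ℝ) < c := by simp only [hc_def]; linarith
  set K : ℝ := l * θ / 2 with hK_def
  have hK : 0 < K := by simp only [hK_def]; nlinarith
  have hK8 : 8 ≤ K := by simp only [hK_def]; linarith
  set A : ℝ := Real.exp (-l * θ ^ 2 / 8 - l + K * c) with hA_def
  have hlogc : Real.log c ≤ θ - θ ^ 2 / 4 := W3_log_aux hθ hθ2
  -- pointwise bound
  have hpt : ∀ x ∈ Set.Ioi c, x ^ (l + a) * Real.exp (-l * x) ≤ A * Real.exp (-(K * x)) := by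
    intro x hx
    have hx1 : c < x := hx
    have hx0 : 0 < x := by linarith
    rw [Real.rpow_def_of_pos hx0, ← Real.exp_add, hA_def, ← Real.exp_add]
    apply Real.exp_le_exp.mpr
    have hlog2 : Real.log x ≤ x - 1 := Real.log_le_sub_one_of_pos hx0
    have hlog1 : Real.log x ≤ Real.log c + (x - c) / c := by
      have hxc : 0 < x / c := by positivity
      have h := Real.log_le_sub_one_of_pos hxc
      rw [Real.log_div hx0.ne' hc.ne'] at h
      have : x / c - 1 = (x - c) / c := by field_simp
      linarith [this ▸ h]
    have hs : 0 ≤ x - c := by linarith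
    have hkey : l ≤ (l - K - a) * c := by
      simp only [hK_def, hc_def]
      nlinarith [hal, mul_pos hl0 hθ, sq_nonneg θ]
    have hmul : l * ((x - c) / c) ≤ (l - K - a) * (x - c) := by
      rw [mul_div_assoc', div_le_iff₀ hc]
      nlinarith [mul_le_mul_of_nonneg_right hkey hs]
    have h1 : l * Real.log x ≤ l * (θ - θ ^ 2 / 4) + (l - K - a) * (x - c) := by
      have e1 := mul_le_mul_of_nonneg_left hlog1 hl0.le
      have e2 := mul_le_mul_of_nonneg_left hlogc hl0.le
      have e3 : l * (Real.log c + (x - c) / c) = l * Real.log c + l * ((x - c) / c) := by ring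
      rw [e3] at e1
      linarith
    have h2 : a * Real.log x ≤ a * (x - 1) := mul_le_mul_of_nonneg_left hlog2 ha
    have haux : a * θ ≤ l * θ ^ 2 / 8 := by nlinarith
    have h1' : l * Real.log x ≤ l * θ - l * θ ^ 2 / 4
        + (l * x - K * x - a * x - l * c + K * c + a * c) := by
      have : l * (θ - θ ^ 2 / 4) + (l - K - a) * (x - c)
          = l * θ - l * θ ^ 2 / 4 + (l * x - K * x - a * x - l * c + K * c + a * c) := by ring
      linarith [this ▸ h1]
    have hlc : l * c = l + l * θ := by rw [hc_def]; ring
    have hac : a * c = a + a * θ := by rw [hc_def]; ring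
    have hexp : Real.log x * (l + a) = l * Real.log x + a * Real.log x := by ring
    rw [hexp]
    linarith
  -- integrability of the bound
  have hbint : IntegrableOn (fun x => A * Real.exp (-(K * x))) (Set.Ioi c) := by
    have := (exp_neg_integrableOn_Ioi c hK).const_mul A
    simpa [neg_mul, IntegrableOn] using this
  have hf0 : 0 ≤ᵐ[volume.restrict (Set.Ioi c)]
      fun x => x ^ (l + a) * Real.exp (-l * x) := by
    refine (ae_restrict_iff' measurableSet_Ioi).mpr (Filter.Eventually.of_forall ?_)
    intro x hx
    have hx0 : 0 < x := by have : c < x := hx; linarith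
    exact mul_nonneg (Real.rpow_nonneg hx0.le _) (Real.exp_pos _).le
  have hle : (fun x => x ^ (l + a) * Real.exp (-l * x)) ≤ᵐ[volume.restrict (Set.Ioi c)]
      fun x => A * Real.exp (-(K * x)) := by
    refine (ae_restrict_iff' measurableSet_Ioi).mpr (Filter.Eventually.of_forall ?_)
    exact fun x hx => hpt x hx
  have hint : (∫ x in Set.Ioi c, x ^ (l + a) * Real.exp (-l * x)) ≤
      ∫ x in Set.Ioi c, A * Real.exp (-(K * x)) :=
    integral_mono_of_nonneg hf0 hbint hle
  have hgval : (∫ x in Set.Ioi c, A * Real.exp (-(K * x))) = A * (Real.exp (-(K * c)) / K) := by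
    rw [MeasureTheory.integral_const_mul, W3_exp_integral c K hK]
  have hfinal : Real.exp l * (A * (Real.exp (-(K * c)) / K)) =
      Real.exp (-l * θ ^ 2 / 8) / K := by
    rw [hA_def, show Real.exp l * (Real.exp (-l * θ ^ 2 / 8 - l + K * c) * (Real.exp (-(K * c)) / K))
        = Real.exp l * Real.exp (-l * θ ^ 2 / 8 - l + K * c) * Real.exp (-(K * c)) / K from by ring,
      ← Real.exp_add, ← Real.exp_add,
      show l + (-l * θ ^ 2 / 8 - l + K * c) + -(K * c) = -l * θ ^ 2 / 8 from by ring]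
  calc Real.exp l * ∫ x in Set.Ioi c, x ^ (l + a) * Real.exp (-l * x)
      ≤ Real.exp l * ∫ x in Set.Ioi c, A * Real.exp (-(K * x)) :=
        mul_le_mul_of_nonneg_left hint (Real.exp_pos _).le
    _ = Real.exp (-l * θ ^ 2 / 8) / K := by rw [hgval, hfinal]
    _ ≤ 1 * Real.exp (-l * θ ^ 2 / 8) := by
        rw [one_mul]
        exact div_le_self (Real.exp_pos _).le (by linarith)
end
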